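/- arXiv:1901.00138 — 9 statements merged into one kernel-verified Lean document; each statement's English description precedes it below -/
import Mathlib

section
/- Every 2-CNF (bijunctive) formula is renamable Horn: if φ is a satisfiable CNF formula in which every clause has at most two literals, then there is a subset of variables such that renaming (flipping the polarity of) those variables in φ yields a Horn formula. -/
/-- Every satisfiable bijunctive (2-CNF) formula is renamable Horn.
A formula is a list of clauses; a clause is a list of literals, a literal being a
variable together with a polarity (`true` = positive).  Renaming by `S : V → Bool`
flips the polarity of literals whose variable satisfies `S`.  A clause is Horn if
it has at most one positive literal. -/
theorem bijunctive_renamable_horn {V : Type} (φ : List (List (V × Bool)))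
    (hsat : ∃ a : V → Bool, ∀ C ∈ φ, ∃ l ∈ C, a l.1 = l.2)
    (hbij : ∀ C ∈ φ, C.length ≤ 2) :
    ∃ S : V → Bool, ∀ C ∈ φ,
      ((C.map (fun l => (l.1, xor (S l.1) l.2))).countP (fun l => l.2)) ≤ 1 := by
  obtain ⟨a, ha⟩ := hsat
  refine ⟨a, fun C hC => ?_⟩
  obtain ⟨l, hl, hal⟩ := ha C hC
  rw [List.countP_map]
  obtain ⟨C₁, C₂, rfl⟩ := List.append_of_mem hl
  have h2 := hbij _ hC
  rw [List.countP_append, List.countP_cons]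
  simp only [Function.comp_def, hal, Bool.xor_self] at *
  have h1 := List.countP_le_length (l := C₁) (p := fun x => (xor (a x.1) x.2 : Bool))
  have h3 := List.countP_le_length (l := C₂) (p := fun x => (xor (a x.1) x.2 : Bool))
  simp only [List.length_append, List.length_cons] at h2
  simp
  omega
end

section
/- A domain D ⊆ {0,1}^n is closed under a binary non-dictatorial projection aggregator if and only if there exists a partition (I, J) of {1,…,n} with I, J nonempty such that D equals (up to the corresponding permutation of coordinates) the Cartesian product D_I × D_J of its projections. -/
/-- A domain `D ⊆ {0,1}ⁿ` is closed under a binary non-dictatorial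
projection aggregator (encoded by `p : Fin n → Bool`, `false ↦ pr₁²`, `true ↦ pr₂²`)
iff there is a partition `(I, Iᶜ)` of the coordinates, both parts nonempty, such that
`D` is (up to the corresponding permutation of coordinates) the product of its
projections, i.e. `D = {z | z|_I ∈ D_I ∧ z|_{Iᶜ} ∈ D_{Iᶜ}}`. -/
theorem binary_projection_aggregator_iff_product {n : ℕ} (D : Set (Fin n → Bool)) :
    (∃ p : Fin n → Bool,
        (∃ j j' : Fin n, p j ≠ p j') ∧
        ∀ x ∈ D, ∀ y ∈ D, (fun j => if p j then y j else x j) ∈ D)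
      ↔
    (∃ I : Set (Fin n), I.Nonempty ∧ Iᶜ.Nonempty ∧
        D = {z | (∃ x ∈ D, ∀ i ∈ I, z i = x i) ∧ (∃ y ∈ D, ∀ j ∉ I, z j = y j)}) := by
  classical
  constructor
  · rintro ⟨p, ⟨j, j', hjj⟩, hclosed⟩
    refine ⟨{i | p i = false}, ?_, ?_, ?_⟩
    · rcases Bool.eq_false_or_eq_true (p j) with h | h
      · refine ⟨j', ?_⟩
        show p j' = false
        cases hpj' : p j' with
        | false => rfl
        | true => exact absurd (h.trans hpj'.symm) hjj
      · exact ⟨j, h⟩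
    · rcases Bool.eq_false_or_eq_true (p j) with h | h
      · refine ⟨j, ?_⟩
        simp only [Set.mem_compl_iff, Set.mem_setOf_eq, h]
        simp
      · refine ⟨j', ?_⟩
        simp only [Set.mem_compl_iff, Set.mem_setOf_eq]
        intro hf
        exact hjj (h.trans hf.symm)
    · ext z
      constructor
      · intro hz
        exact ⟨⟨z, hz, fun _ _ => rfl⟩, ⟨z, hz, fun _ _ => rfl⟩⟩
      · rintro ⟨⟨x, hx, hxz⟩, ⟨y, hy, hyz⟩⟩
        have := hclosed x hx y hy
        convert this using 1
        funext i
        cases hpi : p i with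
        | false =>
          rw [if_neg (by simp)]
          exact hxz i hpi
        | true =>
          rw [if_pos rfl]
          exact hyz i (by simp [hpi])
  · rintro ⟨I, ⟨i0, hi0⟩, ⟨j0, hj0⟩, hD⟩
    refine ⟨fun i => if i ∈ I then false else true, ⟨i0, j0, ?_⟩, ?_⟩
    · have hj0' : j0 ∉ I := hj0
      simp [if_pos hi0, if_neg hj0']
    · intro x hx y hy
      rw [hD]
      refine ⟨⟨x, hx, fun i hi => ?_⟩, ⟨y, hy, fun j hj => ?_⟩⟩
      · simp [hi]
      · simp [hj]
end

section
/- Let D ⊆ {0,1}^n admit a binary aggregator F = (f₁,…,f_n) such that for a partition (H, I, J) of {1,…,n}, f_h is symmetric (i.e., f_h ∈ {∧,∨}) for h ∈ H, f_i = pr₁² for i ∈ I, and f_j = pr₂² for j ∈ J. Then D also admits the binary aggregator G = (g₁,…,g_n) with g_h = f_h for h ∈ H and g_i = pr₁² for all i ∈ I ∪ J. -/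
/-- If `D` admits a binary aggregator whose components are symmetric
(`∧` or `∨`) on `H`, `pr₁²` on `I` and `pr₂²` on `J`, where `(H,I,J)` partitions the
coordinates, then `D` also admits the binary aggregator agreeing with `f` on `H`
and equal to `pr₁²` on `I ∪ J`. -/
theorem aggregator_one_projection {n : ℕ} (D : Set (Fin n → Bool))
    (f : Fin n → Bool → Bool → Bool) (H I J : Set (Fin n))
    (hpart : ∀ j : Fin n,
      (j ∈ H ∧ j ∉ I ∧ j ∉ J) ∨ (j ∉ H ∧ j ∈ I ∧ j ∉ J) ∨ (j ∉ H ∧ j ∉ I ∧ j ∈ J))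
    (hH : ∀ h ∈ H, f h = (fun a b => a && b) ∨ f h = (fun a b => a || b))
    (hI : ∀ i ∈ I, f i = (fun a _ => a))
    (hJ : ∀ j ∈ J, f j = (fun _ b => b))
    (hagg : ∀ x ∈ D, ∀ y ∈ D, (fun j => f j (x j) (y j)) ∈ D) :
    ∃ g : Fin n → Bool → Bool → Bool,
      (∀ h ∈ H, g h = f h) ∧
      (∀ i : Fin n, i ∉ H → g i = (fun a _ => a)) ∧
      (∀ x ∈ D, ∀ y ∈ D, (fun j => g j (x j) (y j)) ∈ D) := by
  classical
  refine ⟨fun j => if j ∈ H then f j else fun a _ => a, ?_, ?_, ?_⟩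
  · intro h hh; simp [hh]
  · intro i hi; simp [hi]
  · intro x hx y hy
    have h1 := hagg x hx y hy
    have h2 := hagg _ h1 x hx
    convert h2 using 1
    funext j
    by_cases hj : j ∈ H
    · simp only [hj, if_pos]
      rcases hH j hj with hf | hf <;> rw [hf] <;>
        cases x j <;> cases y j <;> rfl
    · simp only [hj, if_neg, not_false_iff]
      rcases hpart j with ⟨h, _⟩ | ⟨_, hi, _⟩ | ⟨_, _, hjJ⟩
      · exact absurd h hj
      · rw [hI j hi]
      · rw [hJ j hjJ]
end

section
/- Suppose D ⊆ {0,1}^n admits a ternary aggregator F = (f₁,…,f_n) with each f_j ∈ {∧⁽³⁾, maj, ⊕₃}. Then D admits a binary aggregator G = (g₁,…,g_n) with g_i = ∧ whenever f_i = ∧⁽³⁾, g_j = pr₁² whenever f_j = maj, and g_k = pr₂² whenever f_k = ⊕₃. -/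
/-- Ternary conjunction. -/
def and3 : Bool → Bool → Bool → Bool := fun x y z => x && y && z
/-- Ternary majority. -/
def maj3 : Bool → Bool → Bool → Bool := fun x y z => (x && y) || (y && z) || (x && z)
/-- Ternary XOR. -/
def xor3 : Bool → Bool → Bool → Bool := fun x y z => xor x (xor y z)

/-- If `D` admits a ternary aggregator with components among
`{∧⁽³⁾, maj, ⊕₃}`, then `D` admits a binary aggregator whose components are `∧`
where `f_j = ∧⁽³⁾`, `pr₁²` where `f_j = maj`, and `pr₂²` where `f_j = ⊕₃`. -/
theorem binary_from_ternary_aggregator {n : ℕ} (D : Set (Fin n → Bool))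
    (f : Fin n → Bool → Bool → Bool → Bool)
    (hf : ∀ j, f j = and3 ∨ f j = maj3 ∨ f j = xor3)
    (hagg : ∀ x ∈ D, ∀ y ∈ D, ∀ z ∈ D, (fun j => f j (x j) (y j) (z j)) ∈ D) :
    ∃ g : Fin n → Bool → Bool → Bool,
      (∀ j, f j = and3 → g j = (fun a b => a && b)) ∧
      (∀ j, f j = maj3 → g j = (fun a _ => a)) ∧
      (∀ j, f j = xor3 → g j = (fun _ b => b)) ∧
      (∀ x ∈ D, ∀ y ∈ D, (fun j => g j (x j) (y j)) ∈ D) := by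
  refine ⟨fun j a b => f j a a b, ?_, ?_, ?_, ?_⟩
  · intro j h; funext a b; simp only [h]; cases a <;> cases b <;> rfl
  · intro j h; funext a b; simp only [h]; cases a <;> cases b <;> rfl
  · intro j h; funext a b; simp only [h]; cases a <;> cases b <;> rfl
  · intro x hx y hy; exact hagg x hx x hx y hy
end

section
/- If D ⊆ {0,1}^n is affine (closed under the ternary operation ⊕₃(x,y,z) = x⊕y⊕z applied coordinatewise) and has at least three elements, then the minority aggregator (⊕₃,…,⊕₃) is not a generalized dictatorship for D: there exist x, y, z ∈ D with (⊕₃(x₁,y₁,z₁),…,⊕₃(x_n,y_n,z_n)) ∉ {x, y, z}. -/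
/-- If `D ⊆ {0,1}ⁿ` is affine (closed coordinatewise under
`x ⊕ y ⊕ z`) and has at least three elements, then the minority aggregator
`(⊕₃,…,⊕₃)` is not a generalized dictatorship for `D`. -/
theorem minority_not_generalized_dictatorship {n : ℕ} (D : Set (Fin n → Bool))
    (haff : ∀ x ∈ D, ∀ y ∈ D, ∀ z ∈ D, (fun j => xor (x j) (xor (y j) (z j))) ∈ D)
    (hcard : ∃ x ∈ D, ∃ y ∈ D, ∃ z ∈ D, x ≠ y ∧ x ≠ z ∧ y ≠ z) :
    ∃ x ∈ D, ∃ y ∈ D, ∃ z ∈ D,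
      (fun j => xor (x j) (xor (y j) (z j))) ≠ x ∧
      (fun j => xor (x j) (xor (y j) (z j))) ≠ y ∧
      (fun j => xor (x j) (xor (y j) (z j))) ≠ z := by
  obtain ⟨x, hx, y, hy, z, hz, hxy, hxz, hyz⟩ := hcard
  refine ⟨x, hx, y, hy, z, hz, ?_, ?_, ?_⟩
  · intro h
    apply hyz
    funext j
    have := congrFun h j
    revert this
    cases x j <;> cases y j <;> cases z j <;> simp
  · intro h
    apply hxz
    funext j
    have := congrFun h j
    revert this
    cases x j <;> cases y j <;> cases z j <;> simp
  · intro h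
    apply hxy
    funext j
    have := congrFun h j
    revert this
    cases x j <;> cases y j <;> cases z j <;> simp
end

section
/- Suppose D ⊆ {0,1}^n is non-degenerate (every coordinate projection equals {0,1}) and admits a binary non-dictatorial aggregator F = (f₁,…,f_n) that is not symmetric (some component is a projection, but not all components are the same projection). Then F is not a generalized dictatorship for D. -/
/-- If a non-degenerate `D ⊆ {0,1}ⁿ` admits a binary non-dictatorial
aggregator `f` that is not symmetric (some component is a projection, but not all
components are the same projection), then `f` is not a generalized dictatorship
for `D`. -/
theorem nonsymmetric_not_generalized_dictatorship {n : ℕ} (D : Set (Fin n → Bool))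
    (f : Fin n → Bool → Bool → Bool)
    (hcomp : ∀ j, f j = (fun a b => a && b) ∨ f j = (fun a b => a || b) ∨
                  f j = (fun a _ => a) ∨ f j = (fun _ b => b))
    (hagg : ∀ x ∈ D, ∀ y ∈ D, (fun j => f j (x j) (y j)) ∈ D)
    (hnondeg : ∀ j : Fin n, ∀ b : Bool, ∃ x ∈ D, x j = b)
    (hnotsym : ∃ j, f j = (fun a _ => a) ∨ f j = (fun _ b => b))
    (hnondict : ¬ (∀ j, f j = (fun a _ => a)) ∧ ¬ (∀ j, f j = (fun _ b => b))) :
    ∃ x ∈ D, ∃ y ∈ D,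
      (fun j => f j (x j) (y j)) ≠ x ∧ (fun j => f j (x j) (y j)) ≠ y := by
  by_contra hcon
  push_neg at hcon
  obtain ⟨j, hj | hj⟩ := hnotsym
  · -- f j = pr₁
    obtain ⟨k, hk⟩ := not_forall.mp hnondict.1
    have main : ∀ x ∈ D, ∀ y ∈ D, x j ≠ y j →
        (fun m => f m (x m) (y m)) = x := by
      intro x hx y hy hxy
      by_cases h : (fun m => f m (x m) (y m)) = x
      · exact h
      · have h2 := hcon x hx y hy h
        have := congrFun h2 j
        rw [hj] at this
        exact absurd this hxy
    have const : ∀ x ∈ D, ∀ y ∈ D, x j ≠ y j → x k = y k := by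
      intro x hx y hy hxy
      have h1 : f k (x k) (y k) = x k := congrFun (main x hx y hy hxy) k
      have h2 : f k (y k) (x k) = y k := congrFun (main y hy x hx (Ne.symm hxy)) k
      rcases hcomp k with hfk | hfk | hfk | hfk
      · rw [hfk] at h1 h2; cases hx' : x k <;> cases hy' : y k <;> simp_all
      · rw [hfk] at h1 h2; cases hx' : x k <;> cases hy' : y k <;> simp_all
      · exact absurd hfk hk
      · rw [hfk] at h1; exact h1.symm
    obtain ⟨a, ha, hak⟩ := hnondeg k true
    obtain ⟨b, hb, hbk⟩ := hnondeg k false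
    by_cases hab : a j = b j
    · obtain ⟨c, hc, hck⟩ := hnondeg j (!(a j))
      have h1 := const a ha c hc (by simp [hck])
      have h2 := const c hc b hb (by simp [hck, ← hab])
      simp_all
    · have := const a ha b hb hab; simp_all
  · -- f j = pr₂
    obtain ⟨k, hk⟩ := not_forall.mp hnondict.2
    have main : ∀ x ∈ D, ∀ y ∈ D, x j ≠ y j →
        (fun m => f m (x m) (y m)) = y := by
      intro x hx y hy hxy
      by_cases h : (fun m => f m (x m) (y m)) = x
      · have := congrFun h j
        rw [hj] at this
        exact absurd this.symm hxy
      · exact hcon x hx y hy h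
    have const : ∀ x ∈ D, ∀ y ∈ D, x j ≠ y j → x k = y k := by
      intro x hx y hy hxy
      have h1 : f k (x k) (y k) = y k := congrFun (main x hx y hy hxy) k
      have h2 : f k (y k) (x k) = x k := congrFun (main y hy x hx (Ne.symm hxy)) k
      rcases hcomp k with hfk | hfk | hfk | hfk
      · rw [hfk] at h1 h2; cases hx' : x k <;> cases hy' : y k <;> simp_all
      · rw [hfk] at h1 h2; cases hx' : x k <;> cases hy' : y k <;> simp_all
      · rw [hfk] at h1; exact h1
      · exact absurd hfk hk
    obtain ⟨a, ha, hak⟩ := hnondeg k true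
    obtain ⟨b, hb, hbk⟩ := hnondeg k false
    by_cases hab : a j = b j
    · obtain ⟨c, hc, hck⟩ := hnondeg j (!(a j))
      have h1 := const a ha c hc (by simp [hck])
      have h2 := const c hc b hb (by simp [hck, ← hab])
      simp_all
    · have := const a ha b hb hab; simp_all
end

section
/- Let D ⊆ {0,1}^n be a non-degenerate domain with |D| ≥ 3 that is closed under coordinatewise AND and is totally ordered by the coordinatewise ≤ relation, with elements d¹ < d² < ⋯ < d^N. Let I = {j : d^s_j = 0 for s < N and d^N_j = 1}. Then the binary aggregator G with g_j = ∧ for j ∈ I and g_j = ∨ for j ∉ I is an aggregator for D, and G(d^s, d^N) = d^{N−1} for every s < N; in particular G is not a generalized dictatorship for D. -/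
/-- Let `D` be a non-degenerate domain with `N ≥ 3` elements
`d⁰ < d¹ < ⋯ < d^{N-1}` (coordinatewise total order), closed under coordinatewise
AND.  Let `I = {j : d^s_j = 0 for all s < N-1 and d^{N-1}_j = 1}`.  Then the binary
aggregator `G` with `g_j = ∧` for `j ∈ I` and `g_j = ∨` for `j ∉ I` is an aggregator
for `D`, `G(d^s, d^{N-1}) = d^{N-2}` for every `s < N-1`, and in particular `G` is
not a generalized dictatorship for `D`. -/
theorem nontrivial_aggregator_of_chain {n N : ℕ} (hN : 3 ≤ N)
    (d : Fin N → (Fin n → Bool)) (D : Set (Fin n → Bool)) (hD : D = Set.range d)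
    (hmono : ∀ s t : Fin N, s < t →
      (∀ j, d s j = true → d t j = true) ∧ d s ≠ d t)
    (hnondeg : ∀ j : Fin n, ∀ b : Bool, ∃ x ∈ D, x j = b)
    (hand : ∀ x ∈ D, ∀ y ∈ D, (fun j => x j && y j) ∈ D)
    (I : Set (Fin n))
    (hI : I = {j | (∀ s : Fin N, (s : ℕ) < N - 1 → d s j = false) ∧
                    d ⟨N - 1, by omega⟩ j = true}) :
    ∃ g : Fin n → Bool → Bool → Bool,
      (∀ j ∈ I, g j = (fun a b => a && b)) ∧
      (∀ j ∉ I, g j = (fun a b => a || b)) ∧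
      (∀ x ∈ D, ∀ y ∈ D, (fun j => g j (x j) (y j)) ∈ D) ∧
      (∀ s : Fin N, (s : ℕ) < N - 1 →
        (fun j => g j (d s j) (d ⟨N - 1, by omega⟩ j)) = d ⟨N - 2, by omega⟩) ∧
      (∃ x ∈ D, ∃ y ∈ D,
        (fun j => g j (x j) (y j)) ≠ x ∧ (fun j => g j (x j) (y j)) ≠ y) := by
  classical
  have hN1 : N - 1 < N := by omega
  have hN2 : N - 2 < N := by omega
  set M1 : Fin N := ⟨N - 1, hN1⟩ with hM1
  set M2 : Fin N := ⟨N - 2, hN2⟩ with hM2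
  have mono : ∀ (s t : Fin N) (j : Fin n), s ≤ t → d s j = true → d t j = true := by
    intro s t j hst h
    rcases eq_or_lt_of_le hst with rfl | h'
    · exact h
    · exact (hmono s t h').1 j h
  -- any element below N-1 is ≤ d M2
  have leM2 : ∀ (s : Fin N) (j : Fin n), (s : ℕ) < N - 1 → d s j = true → d M2 j = true := by
    intro s j hs h
    exact mono s M2 j (by rw [Fin.le_def]; simp [hM2]; omega) h
  have onI : ∀ j ∈ I, (∀ s : Fin N, (s : ℕ) < N - 1 → d s j = false) ∧ d M1 j = true := by
    intro j hj
    rw [hI] at hj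
    exact hj
  have hM2lt : (M2 : ℕ) < N - 1 := by simp [hM2]; omega
  have offI : ∀ j ∉ I, d M1 j = d M2 j := by
    intro j hj
    rw [hI] at hj
    simp only [Set.mem_setOf_eq, not_and] at hj
    cases h1 : d M1 j with
    | false =>
      cases h2 : d M2 j with
      | false => rfl
      | true =>
        have := mono M2 M1 j (by rw [Fin.le_def]; simp [hM1, hM2]; omega) h2
        rw [h1] at this; exact absurd this (by simp)
    | true =>
      have h3 := hj
      have : ¬ (∀ s : Fin N, (s : ℕ) < N - 1 → d s j = false) := by
        intro hall
        exact absurd (h3 hall) (by simp [h1])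
      push_neg at this
      obtain ⟨s, hs, hsne⟩ := this
      have hst : d s j = true := by
        cases h : d s j with
        | false => exact absurd h hsne
        | true => rfl
      rw [leM2 s j hs hst]
  set g : Fin n → Bool → Bool → Bool :=
    fun j => if j ∈ I then (fun a b => a && b) else (fun a b => a || b) with hg
  have key : ∀ s : Fin N, (s : ℕ) < N - 1 →
      (fun j => g j (d s j) (d M1 j)) = d M2 := by
    intro s hs
    funext j
    by_cases hj : j ∈ I
    · have h1 := (onI j hj).1 s hs
      have h2 := (onI j hj).1 M2 hM2lt
      simp [hg, hj, h1, h2]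
    · have h3 := offI j hj
      simp only [hg, if_neg hj]
      rw [h3]
      cases hds : d s j with
      | false => simp
      | true => simp [leM2 s j hs hds]
  have key' : ∀ s : Fin N, (s : ℕ) < N - 1 →
      (fun j => g j (d M1 j) (d s j)) = d M2 := by
    intro s hs
    funext j
    by_cases hj : j ∈ I
    · have h1 := (onI j hj).1 s hs
      have h2 := (onI j hj).1 M2 hM2lt
      simp [hg, hj, h1, h2]
    · have h3 := offI j hj
      simp only [hg, if_neg hj]
      cases hds : d s j with
      | false => simp [h3]
      | true =>
        have hm := mono s M1 j (by rw [Fin.le_def]; simp [hM1]; omega) hds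
        simp [hm, h3 ▸ hm]
  refine ⟨g, ?_, ?_, ?_, ?_, ?_⟩
  · intro j hj; simp [hg, hj]
  · intro j hj; simp [hg, hj]
  · -- closure
    intro x hx y hy
    rw [hD] at hx hy ⊢
    obtain ⟨s, rfl⟩ := hx
    obtain ⟨t, rfl⟩ := hy
    by_cases hs : (s : ℕ) < N - 1
    · by_cases ht : (t : ℕ) < N - 1
      · -- both below: result is max
        rcases le_total s t with hle | hle
        · refine ⟨t, ?_⟩
          funext j
          by_cases hj : j ∈ I
          · have h1 := (onI j hj).1 s hs
            have h2 := (onI j hj).1 t ht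
            simp [hg, hj, h1, h2]
          · simp only [hg, if_neg hj]
            cases hds : d s j with
            | false => simp
            | true => simp [mono s t j hle hds]
        · refine ⟨s, ?_⟩
          funext j
          by_cases hj : j ∈ I
          · have h1 := (onI j hj).1 s hs
            have h2 := (onI j hj).1 t ht
            simp [hg, hj, h1, h2]
          · simp only [hg, if_neg hj]
            cases hdt : d t j with
            | false => simp
            | true => simp [mono t s j hle hdt]
      · have ht' : t = M1 := by
          rw [Fin.ext_iff]; simp [hM1]; omega
        subst ht'
        exact ⟨M2, (key s hs).symm⟩
    · have hs' : s = M1 := by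
        rw [Fin.ext_iff]; simp [hM1]; omega
      subst hs'
      by_cases ht : (t : ℕ) < N - 1
      · exact ⟨M2, (key' t ht).symm⟩
      · have ht' : t = M1 := by
          rw [Fin.ext_iff]; simp [hM1]; omega
        subst ht'
        refine ⟨M1, ?_⟩
        funext j
        by_cases hj : j ∈ I
        · simp [hg, hj, (onI j hj).2]
        · simp [hg, hj]
  · intro s hs; exact key s hs
  · have h0 : (0 : ℕ) < N - 1 := by omega
    have h0N : 0 < N := by omega
    refine ⟨d ⟨0, h0N⟩, by rw [hD]; exact ⟨_, rfl⟩, d M1, by rw [hD]; exact ⟨_, rfl⟩, ?_, ?_⟩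
    · rw [key ⟨0, h0N⟩ h0]
      have := (hmono ⟨0, h0N⟩ M2 (by rw [Fin.lt_def]; simp [hM2]; omega)).2
      exact fun h => this h.symm
    · rw [key ⟨0, h0N⟩ h0]
      exact (hmono M2 M1 (by rw [Fin.lt_def]; simp [hM1, hM2]; omega)).2
end

section
/- A domain D ⊆ {0,1}^n with at least three elements admits an aggregator that is not a generalized dictatorship if and only if D is a possibility domain (admits a non-dictatorial aggregator of some arity). -/
/-- `F` is a `k`-ary aggregator for `D`: components are unanimous and `F` maps
`k`-tuples of elements of `D` (applied coordinatewise) into `D`. -/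
def isAggregator {n k : ℕ} (D : Set (Fin n → Bool))
    (F : Fin n → (Fin k → Bool) → Bool) : Prop :=
  (∀ j b, F j (fun _ => b) = b) ∧
  ∀ xs : Fin k → (Fin n → Bool), (∀ i, xs i ∈ D) →
    (fun j => F j (fun i => xs i j)) ∈ D

/-- `F` is dictatorial: all components equal the same projection. -/
def isDictatorial {n k : ℕ} (F : Fin n → (Fin k → Bool) → Bool) : Prop :=
  ∃ i : Fin k, ∀ j, F j = fun v => v i

/-- `F` is a generalized dictatorship for `D`: on any `k` inputs from `D` it
returns one of them. -/
def isGenDictatorship {n k : ℕ} (D : Set (Fin n → Bool))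
    (F : Fin n → (Fin k → Bool) → Bool) : Prop :=
  ∀ xs : Fin k → (Fin n → Bool), (∀ i, xs i ∈ D) →
    ∃ i : Fin k, (fun j => F j (fun i' => xs i' j)) = xs i

namespace NGD

/-- a two-row tuple of booleans -/
def two (a b : Bool) : Fin 2 → Bool := fun i => if (i : ℕ) = 0 then a else b

@[simp] lemma two_zero (a b : Bool) : two a b 0 = a := rfl
@[simp] lemma two_one (a b : Bool) : two a b 1 = b := rfl

lemma two_eta (v : Fin 2 → Bool) : two (v 0) (v 1) = v := by
  funext i; fin_cases i <;> rfl

lemma two_const (a : Bool) : two a a = fun _ => a := by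
  funext i; simp [two]

/-- two rows packaged -/
def mk2 {n : ℕ} (x y : Fin n → Bool) : Fin 2 → (Fin n → Bool) :=
  fun i => if (i : ℕ) = 0 then x else y

@[simp] lemma mk2_zero {n} (x y : Fin n → Bool) : mk2 x y 0 = x := rfl
@[simp] lemma mk2_one {n} (x y : Fin n → Bool) : mk2 x y 1 = y := rfl

lemma mk2_col {n} (x y : Fin n → Bool) (j : Fin n) :
    (fun i => mk2 x y i j) = two (x j) (y j) := by
  funext i; by_cases h : (i : ℕ) = 0 <;> simp [mk2, two, h]

lemma mk2_mem {n} {D : Set (Fin n → Bool)} {x y : Fin n → Bool}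
    (hx : x ∈ D) (hy : y ∈ D) : ∀ i, mk2 x y i ∈ D := by
  intro i; by_cases h : (i : ℕ) = 0 <;> simp [mk2, h, hx, hy]

lemma col_eq {n : ℕ} (G : Fin n → (Fin 2 → Bool) → Bool) (x y : Fin n → Bool) :
    (fun j => G j (fun i => mk2 x y i j)) = fun j => G j (two (x j) (y j)) := by
  funext j; rw [mk2_col]

/-- union of two equivalence-like relations covering a set: one is complete -/
lemma cover {α : Type*} (S : Set α) (R1 R2 : α → α → Prop)
    (h1s : ∀ {x y}, R1 x y → R1 y x)
    (h1t : ∀ {x y z}, R1 x y → R1 y z → R1 x z)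
    (h2s : ∀ {x y}, R2 x y → R2 y x)
    (h2t : ∀ {x y z}, R2 x y → R2 y z → R2 x z)
    (hcov : ∀ x ∈ S, ∀ y ∈ S, R1 x y ∨ R2 x y) :
    (∀ x ∈ S, ∀ y ∈ S, R1 x y) ∨ (∀ x ∈ S, ∀ y ∈ S, R2 x y) := by
  by_contra h
  push_neg at h
  obtain ⟨⟨a, ha, b, hb, hab⟩, ⟨c, hc, d, hd, hcd⟩⟩ := h
  have rab : R2 a b := (hcov a ha b hb).resolve_left hab
  have rcd : R1 c d := (hcov c hc d hd).resolve_right hcd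
  by_cases hac : R1 a c
  · have hbc : R2 b c := by
      rcases hcov b hb c hc with h' | h'
      · exact absurd (h1t hac (h1s h')) hab
      · exact h'
    have hbd : R2 b d := by
      rcases hcov b hb d hd with h' | h'
      · exact absurd (h1t hac (h1t rcd (h1s h'))) hab
      · exact h'
    exact hcd (h2t (h2s hbc) hbd)
  · have rac : R2 a c := (hcov a ha c hc).resolve_left hac
    have rad : R2 a d := by
      rcases hcov a ha d hd with h' | h'
      · exact absurd (h1t h' (h1s rcd)) hac
      · exact h'
    exact hcd (h2t (h2s rac) rad)

section Main

variable {n : ℕ} {D : Set (Fin n → Bool)}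

theorem binary_dict
    (hnd : ∀ j : Fin n, ∀ b : Bool, ∃ x ∈ D, x j = b)
    (hc3 : ∃ x ∈ D, ∃ y ∈ D, ∃ z ∈ D, x ≠ y ∧ x ≠ z ∧ y ≠ z)
    (HG : ∀ k : ℕ, 0 < k → ∀ F : Fin n → (Fin k → Bool) → Bool,
      isAggregator D F → isGenDictatorship D F)
    (F : Fin n → (Fin 2 → Bool) → Bool)
    (hF : isAggregator D F) : isDictatorial F := by
  classical
  obtain ⟨hun, hcl⟩ := hF
  set al : Fin n → Bool := fun j => F j (two false true) with hal
  set be : Fin n → Bool := fun j => F j (two true false) with hbe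
  have Ftab : ∀ j (a b : Bool), F j (two a b) =
      if a = b then a else if a = true then be j else al j := by
    intro j a b
    cases a <;> cases b <;> simp [hal, hbe, two_const, hun j]
  have hrow : ∀ x ∈ D, ∀ y ∈ D, (fun j => F j (two (x j) (y j))) ∈ D := by
    intro x hx y hy
    have h := hcl (mk2 x y) (mk2_mem hx hy)
    simpa [mk2_col] using h
  set Bg : Fin n → (Fin 2 → Bool) → Bool :=
    fun j v => F j (two (F j (two (v 0) (v 1))) (F j (two (v 1) (v 0)))) with hBg
  have hBagg : isAggregator D Bg := by
    constructor
    · intro j bb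
      simp [hBg, two_const, hun j]
    · intro xs hxs
      exact hrow _ (hrow _ (hxs 0) _ (hxs 1)) _ (hrow _ (hxs 1) _ (hxs 0))
  have Btab : ∀ j (a b : Bool), Bg j (two a b) =
      if al j = be j then (if al j = true then a || b else a && b) else a := by
    intro j a b
    cases hA : al j <;> cases hB : be j <;> cases a <;> cases b <;>
      simp [hBg, Ftab, hA, hB]
  have genB : ∀ x ∈ D, ∀ y ∈ D,
      (∀ j, Bg j (two (x j) (y j)) = x j) ∨ (∀ j, Bg j (two (x j) (y j)) = y j) := by
    intro x hx y hy
    obtain ⟨i, hi⟩ := HG 2 (by norm_num) Bg hBagg (mk2 x y) (mk2_mem hx hy)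
    rw [col_eq] at hi
    fin_cases i
    · left; intro j
      have h := congrFun hi j
      simpa [mk2] using h
    · right; intro j
      have h := congrFun hi j
      simpa [mk2] using h
  have hdisj : ∀ x ∈ D, ∀ y ∈ D,
      (∀ j, al j = be j →
        (if al j = true then x j || y j else x j && y j) = x j) ∨
      ((∀ j, al j ≠ be j → x j = y j) ∧
       (∀ j, al j = be j →
        (if al j = true then y j || x j else y j && x j) = y j)) := by
    intro x hx y hy
    rcases genB x hx y hy with h | h
    · left; intro j hj
      have hb := (Btab j (x j) (y j)).symm.trans (h j)
      rw [if_pos hj] at hb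
      exact hb
    · right
      constructor
      · intro j hj
        have hb := (Btab j (x j) (y j)).symm.trans (h j)
        rw [if_neg hj] at hb
        exact hb
      · intro j hj
        have hb := (Btab j (x j) (y j)).symm.trans (h j)
        rw [if_pos hj] at hb
        revert hb
        cases al j <;> cases x j <;> cases y j <;> simp
  have hcov1 : ∀ x ∈ D, ∀ y ∈ D,
      (∀ j, al j ≠ be j → x j = y j) ∨ (∀ j, al j = be j → x j = y j) := by
    intro x hx y hy
    rcases hdisj x hx y hy with h1 | ⟨hp, _⟩
    · rcases hdisj y hy x hx with h2 | ⟨hp, _⟩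
      · right; intro j hj
        have e1 := h1 j hj
        have e2 := h2 j hj
        revert e1 e2
        cases al j <;> cases x j <;> cases y j <;> simp
      · left; intro j hj; exact (hp j hj).symm
    · left; exact hp
  rcases cover D _ _
      (fun {x y} h j hj => (h j hj).symm)
      (fun {x y z} h1 h2 j hj => (h1 j hj).trans (h2 j hj))
      (fun {x y} h j hj => (h j hj).symm)
      (fun {x y z} h1 h2 j hj => (h1 j hj).trans (h2 j hj))
      hcov1 with hP | hAO
  · -- all coordinates are AND/OR type: al j = be j everywhere; derive False
    exfalso
    have hall : ∀ j, al j = be j := by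
      intro j; by_contra hj
      obtain ⟨x, hx, hx0⟩ := hnd j false
      obtain ⟨y, hy, hy1⟩ := hnd j true
      have h := hP x hx y hy j hj
      rw [hx0, hy1] at h
      exact Bool.false_ne_true h
    have tot : ∀ x ∈ D, ∀ y ∈ D,
        (∀ j, (if al j = true then x j || y j else x j && y j) = x j) ∨
        (∀ j, (if al j = true then y j || x j else y j && x j) = y j) := by
      intro x hx y hy
      rcases hdisj x hx y hy with h | ⟨_, h⟩
      · left; intro j; exact h j (hall j)
      · right; intro j; exact h j (hall j)
    obtain ⟨x, hx, y, hy, z, hz, hxy, hxz, hyz⟩ := hc3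
    obtain ⟨a, ha, b, hb, c, hc, hab, hbc, hba, hbc2⟩ :
        ∃ a ∈ D, ∃ b ∈ D, ∃ c ∈ D,
          (∀ j, (if al j = true then a j || b j else a j && b j) = a j) ∧
          (∀ j, (if al j = true then b j || c j else b j && c j) = b j) ∧
          b ≠ a ∧ b ≠ c := by
      rcases tot x hx y hy with h1 | h1
      · rcases tot y hy z hz with h2 | h2
        · exact ⟨x, hx, y, hy, z, hz, h1, h2, Ne.symm hxy, hyz⟩
        · rcases tot x hx z hz with h3 | h3
          · exact ⟨x, hx, z, hz, y, hy, h3, h2, Ne.symm hxz, Ne.symm hyz⟩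
          · exact ⟨z, hz, x, hx, y, hy, h3, h1, hxz, hxy⟩
      · rcases tot y hy z hz with h2 | h2
        · rcases tot x hx z hz with h3 | h3
          · exact ⟨y, hy, x, hx, z, hz, h1, h3, hxy, hxz⟩
          · exact ⟨y, hy, z, hz, x, hx, h2, h3, Ne.symm hyz, Ne.symm hxz⟩
        · exact ⟨z, hz, y, hy, x, hx, h2, h1, hyz, Ne.symm hxy⟩
    have Lmin : ∀ (cc bb u v : Bool),
        (if cc = true then bb || u else bb && u) = bb →
        (if cc = true then bb || v else bb && v) = bb →
        (if cc = true then u || v else u && v) = u →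
        ((u && v) || (bb && (u || v))) = u := by decide
    have Lmin' : ∀ (cc bb u v : Bool),
        (if cc = true then bb || u else bb && u) = bb →
        (if cc = true then bb || v else bb && v) = bb →
        (if cc = true then v || u else v && u) = v →
        ((u && v) || (bb && (u || v))) = v := by decide
    have Lmid : ∀ (cc bb u v : Bool),
        (if cc = true then u || bb else u && bb) = u →
        (if cc = true then bb || v else bb && v) = bb →
        ((u && v) || (bb && (u || v))) = bb := by decide
    have Lmid' : ∀ (cc bb u v : Bool),
        (if cc = true then v || bb else v && bb) = v →
        (if cc = true then bb || u else bb && u) = bb →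
        ((u && v) || (bb && (u || v))) = bb := by decide
    have Lmax : ∀ (cc bb u v : Bool),
        (if cc = true then u || bb else u && bb) = u →
        (if cc = true then v || bb else v && bb) = v →
        (if cc = true then u || v else u && v) = u →
        ((u && v) || (bb && (u || v))) = v := by decide
    have Lmax' : ∀ (cc bb u v : Bool),
        (if cc = true then u || bb else u && bb) = u →
        (if cc = true then v || bb else v && bb) = v →
        (if cc = true then v || u else v && u) = v →
        ((u && v) || (bb && (u || v))) = u := by decide
    set Hg : Fin n → (Fin 2 → Bool) → Bool :=
      fun j v => (v 0 && v 1) || (b j && (v 0 || v 1)) with hHg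
    have key : ∀ u ∈ D, ∀ v ∈ D,
        (fun j => (u j && v j) || (b j && (u j || v j))) ∈ D := by
      intro u hu v hv
      rcases tot b hb u hu with h1 | h1 <;> rcases tot b hb v hv with h2 | h2
      · rcases tot u hu v hv with h3 | h3
        · have he : (fun j => (u j && v j) || (b j && (u j || v j))) = u :=
            funext fun j => Lmin (al j) (b j) (u j) (v j) (h1 j) (h2 j) (h3 j)
          rw [he]; exact hu
        · have he : (fun j => (u j && v j) || (b j && (u j || v j))) = v :=
            funext fun j => Lmin' (al j) (b j) (u j) (v j) (h1 j) (h2 j) (h3 j)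
          rw [he]; exact hv
      · have he : (fun j => (u j && v j) || (b j && (u j || v j))) = b :=
          funext fun j => Lmid' (al j) (b j) (u j) (v j) (h2 j) (h1 j)
        rw [he]; exact hb
      · have he : (fun j => (u j && v j) || (b j && (u j || v j))) = b :=
          funext fun j => Lmid (al j) (b j) (u j) (v j) (h1 j) (h2 j)
        rw [he]; exact hb
      · rcases tot u hu v hv with h3 | h3
        · have he : (fun j => (u j && v j) || (b j && (u j || v j))) = v :=
            funext fun j => Lmax (al j) (b j) (u j) (v j) (h1 j) (h2 j) (h3 j)
          rw [he]; exact hv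
        · have he : (fun j => (u j && v j) || (b j && (u j || v j))) = u :=
            funext fun j => Lmax' (al j) (b j) (u j) (v j) (h1 j) (h2 j) (h3 j)
          rw [he]; exact hu
    have hHagg : isAggregator D Hg := by
      constructor
      · intro j bb
        simp only [hHg]
        cases bb <;> cases b j <;> rfl
      · intro xs hxs
        exact key _ (hxs 0) _ (hxs 1)
    obtain ⟨i, hi⟩ := HG 2 (by norm_num) Hg hHagg (mk2 a c) (mk2_mem ha hc)
    have hvec : (fun j => Hg j (fun i' => mk2 a c i' j)) = b := by
      funext j
      show ((a j && c j) || (b j && (a j || c j))) = b j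
      exact Lmid (al j) (b j) (a j) (c j) (hab j) (hbc j)
    rw [hvec] at hi
    fin_cases i
    · exact hba (by simpa [mk2] using hi)
    · exact hbc2 (by simpa [mk2] using hi)
  · -- all coordinates are projection type
    have hall : ∀ j, al j ≠ be j := by
      intro j hj
      obtain ⟨x, hx, hx0⟩ := hnd j false
      obtain ⟨y, hy, hy1⟩ := hnd j true
      have h := hAO x hx y hy j hj
      rw [hx0, hy1] at h
      exact Bool.false_ne_true h
    have genF : ∀ x ∈ D, ∀ y ∈ D,
        (∀ j, F j (two (x j) (y j)) = x j) ∨ (∀ j, F j (two (x j) (y j)) = y j) := by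
      intro x hx y hy
      obtain ⟨i, hi⟩ := HG 2 (by norm_num) F ⟨hun, hcl⟩ (mk2 x y) (mk2_mem hx hy)
      rw [col_eq] at hi
      fin_cases i
      · left; intro j
        have h := congrFun hi j
        simpa [mk2] using h
      · right; intro j
        have h := congrFun hi j
        simpa [mk2] using h
    have hcov2 : ∀ x ∈ D, ∀ y ∈ D,
        (∀ j, al j = false → x j = y j) ∨ (∀ j, al j = true → x j = y j) := by
      intro x hx y hy
      rcases genF x hx y hy with h | h
      · right; intro j hA
        have hB : be j = false := by
          cases hbj : be j
          · rfl
          · exact absurd (hA.trans hbj.symm) (hall j)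
        by_contra hne
        have ht := (Ftab j (x j) (y j)).symm.trans (h j)
        rw [if_neg hne] at ht
        revert ht
        cases hxj : x j <;> simp [hA, hB]
      · left; intro j hA
        have hB : be j = true := by
          cases hbj : be j
          · exact absurd (hA.trans hbj.symm) (hall j)
          · rfl
        by_contra hne
        have ht := (Ftab j (x j) (y j)).symm.trans (h j)
        rw [if_neg hne] at ht
        revert ht
        cases hxj : x j <;> cases hyj : y j <;> simp_all [hA, hB]
    rcases cover D _ _
        (fun {x y} h j hj => (h j hj).symm)
        (fun {x y z} h1 h2 j hj => (h1 j hj).trans (h2 j hj))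
        (fun {x y} h j hj => (h j hj).symm)
        (fun {x y z} h1 h2 j hj => (h1 j hj).trans (h2 j hj))
        hcov2 with hC | hC
    · -- no coordinate has al j = false : all are "projection to slot 1"
      have hA : ∀ j, al j = true := by
        intro j
        cases hAj : al j
        · exfalso
          obtain ⟨x, hx, hx0⟩ := hnd j false
          obtain ⟨y, hy, hy1⟩ := hnd j true
          have h := hC x hx y hy j hAj
          rw [hx0, hy1] at h
          exact Bool.false_ne_true h
        · rfl
      refine ⟨1, fun j => funext fun v => ?_⟩
      have hB : be j = false := by
        cases hbj : be j
        · rfl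
        · exact absurd ((hA j).trans hbj.symm) (hall j)
      have ht := Ftab j (v 0) (v 1)
      rw [two_eta] at ht
      rw [ht]
      by_cases hv : v 0 = v 1
      · rw [if_pos hv]; exact hv
      · rw [if_neg hv]
        cases h0 : v 0 <;> cases h1 : v 1
        · exact absurd (h0.trans h1.symm) hv
        · rw [if_neg (by decide : ¬(false = true))]
          exact hA j
        · rw [if_pos rfl]
          exact hB
        · exact absurd (h0.trans h1.symm) hv
    · -- all are "projection to slot 0"
      have hA : ∀ j, al j = false := by
        intro j
        cases hAj : al j
        · rfl
        · exfalso
          obtain ⟨x, hx, hx0⟩ := hnd j false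
          obtain ⟨y, hy, hy1⟩ := hnd j true
          have h := hC x hx y hy j hAj
          rw [hx0, hy1] at h
          exact Bool.false_ne_true h
      refine ⟨0, fun j => funext fun v => ?_⟩
      have hB : be j = true := by
        cases hbj : be j
        · exact absurd ((hA j).trans hbj.symm) (hall j)
        · rfl
      have ht := Ftab j (v 0) (v 1)
      rw [two_eta] at ht
      rw [ht]
      by_cases hv : v 0 = v 1
      · rw [if_pos hv]
      · rw [if_neg hv]
        cases h0 : v 0 <;> cases h1 : v 1
        · exact absurd (h0.trans h1.symm) hv
        · rw [if_neg (by decide : ¬(false = true))]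
          exact hA j
        · rw [if_pos rfl]
          exact hB
        · exact absurd (h0.trans h1.symm) hv


theorem all_dict
    (hnd : ∀ j : Fin n, ∀ b : Bool, ∃ x ∈ D, x j = b)
    (hc3 : ∃ x ∈ D, ∃ y ∈ D, ∃ z ∈ D, x ≠ y ∧ x ≠ z ∧ y ≠ z)
    (HG : ∀ k : ℕ, 0 < k → ∀ F : Fin n → (Fin k → Bool) → Bool,
      isAggregator D F → isGenDictatorship D F)
    (k : ℕ) (hk : 2 ≤ k) (F : Fin n → (Fin k → Bool) → Bool)
    (hF : isAggregator D F) : isDictatorial F := by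
  classical
  obtain ⟨hun, hcl⟩ := hF
  obtain ⟨x0, hx0, y0, hy0, z0, hz0, hxy0, hxz0, hyz0⟩ := id hc3
  have hn : 0 < n := by
    rcases Nat.eq_zero_or_pos n with h0 | h0
    · exfalso; apply hxy0; funext i; exact absurd i.isLt (by omega)
    · exact h0
  set j0 : Fin n := ⟨0, hn⟩ with hj0
  -- two-block minors give a single boolean function c governing all components
  have hcs : ∀ s : Fin k → Bool, ∃ cs : Bool, ∀ j (a b : Bool),
      F j (fun i => if s i then b else a) = cond cs b a := by
    intro s
    set G : Fin n → (Fin 2 → Bool) → Bool :=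
      fun j v => F j (fun i => if s i then v 1 else v 0) with hG
    have hGagg : isAggregator D G := by
      constructor
      · intro j bb
        have he : (fun i : Fin k => if s i then bb else bb) = fun _ => bb := by
          funext i; simp
        show F j (fun i => if s i then bb else bb) = bb
        rw [he]; exact hun j bb
      · intro xs hxs
        have h := hcl (fun i => if s i then xs 1 else xs 0) (fun i => by
          by_cases hsi : s i <;> simp [hsi, hxs 0, hxs 1])
        have he : (fun j => G j (fun i2 => xs i2 j)) =
            (fun j => F j (fun i => (if s i then xs 1 else xs 0) j)) := by
          funext j; show F j _ = _; congr 1; funext i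
          by_cases hsi : s i <;> simp [hsi]
        rw [he]; exact h
    obtain ⟨i2, hd⟩ := binary_dict hnd hc3 HG G hGagg
    have hgg : ∀ j (a b : Bool), G j (two a b) = F j (fun i => if s i then b else a) := by
      intro j a b; rfl
    fin_cases i2
    · refine ⟨false, fun j a b => ?_⟩
      have h := congrFun (hd j) (two a b)
      rw [hgg] at h
      simpa [two] using h
    · refine ⟨true, fun j a b => ?_⟩
      have h := congrFun (hd j) (two a b)
      rw [hgg] at h
      simpa [two] using h
  choose c hc using hcs
  have Fc : ∀ j v, F j v = c v := by
    intro j v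
    have h := hc v j false true
    have he : (fun i => if v i then true else false) = v := by
      funext i; cases hvi : v i <;> simp
    rw [he] at h
    rw [h]
    cases c v <;> rfl
  have cconstT : c (fun _ => true) = true := by
    have h := hun j0 true; rw [Fc j0] at h; exact h
  have cconstF : c (fun _ => false) = false := by
    have h := hun j0 false; rw [Fc j0] at h; exact h
  have ccompl : ∀ s : Fin k → Bool, c (fun i => !(s i)) = !(c s) := by
    intro s
    have h := hc s j0 true false
    have he : (fun i => if s i then false else true) = fun i => !(s i) := by
      funext i; cases hsi : s i <;> simp
    rw [he] at h
    have h2 := (Fc j0 (fun i => !(s i))).symm.trans h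
    rw [h2]
    cases c s <;> rfl
  -- a binary aggregator whose evaluations on the two mixed inputs agree is impossible
  have wcontra : ∀ W : Fin n → (Fin 2 → Bool) → Bool, isAggregator D W →
      W j0 (two true false) = W j0 (two false true) → False := by
    intro W hW hEq
    obtain ⟨i2, hdW⟩ := binary_dict hnd hc3 HG W hW
    have h1 := congrFun (hdW j0) (two true false)
    have h2 := congrFun (hdW j0) (two false true)
    rw [hEq] at h1
    have h3 := h1.symm.trans h2
    fin_cases i2 <;> simp [two] at h3
  -- exactly one block of any 3-partition is "winning"
  have exactOne : ∀ s1 s2 : Fin k → Bool, (∀ i, s1 i = true → s2 i = false) →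
      (c s1 = true ∧ c s2 = false ∧ c (fun i => !(s1 i) && !(s2 i)) = false) ∨
      (c s1 = false ∧ c s2 = true ∧ c (fun i => !(s1 i) && !(s2 i)) = false) ∨
      (c s1 = false ∧ c s2 = false ∧ c (fun i => !(s1 i) && !(s2 i)) = true) := by
    intro s1 s2 hds
    set s3 : Fin k → Bool := fun i => !(s1 i) && !(s2 i) with hs3
    have bl100 : (fun i => if s1 i then true else if s2 i then false else false) = s1 := by
      funext i; cases h1 : s1 i <;> cases h2 : s2 i <;> simp [h1, h2]
    have bl010 : (fun i => if s1 i then false else if s2 i then true else false) = s2 := by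
      funext i; cases h1 : s1 i
      · cases h2 : s2 i <;> simp [h1, h2]
      · simp [h1, hds i h1]
    have bl001 : (fun i => if s1 i then false else if s2 i then false else true) = s3 := by
      funext i; cases h1 : s1 i <;> cases h2 : s2 i <;> simp [hs3, h1, h2]
    have bl110 : (fun i => if s1 i then true else if s2 i then true else false)
        = fun i => !(s3 i) := by
      funext i; cases h1 : s1 i <;> cases h2 : s2 i <;> simp [hs3, h1, h2]
    have bl101 : (fun i => if s1 i then true else if s2 i then false else true)
        = fun i => !(s2 i) := by
      funext i; cases h1 : s1 i
      · cases h2 : s2 i <;> simp [h1, h2]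
      · simp [h1, hds i h1]
    have bl011 : (fun i => if s1 i then false else if s2 i then true else true)
        = fun i => !(s1 i) := by
      funext i; cases h1 : s1 i <;> simp [h1]
    have memBlend : ∀ r0 r1 r2 : Fin n → Bool, r0 ∈ D → r1 ∈ D → r2 ∈ D →
        (fun j => F j (fun i => if s1 i then r0 j else if s2 i then r1 j else r2 j)) ∈ D := by
      intro r0 r1 r2 h0 h1 h2
      have h := hcl (fun i => if s1 i then r0 else if s2 i then r1 else r2) (fun i => by
        by_cases hh1 : s1 i
        · simp [hh1, h0]
        · by_cases hh2 : s2 i <;> simp [hh1, hh2, h1, h2])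
      have he : (fun j => F j (fun i => if s1 i then r0 j else if s2 i then r1 j else r2 j)) =
          (fun j => F j (fun i => (if s1 i then r0 else if s2 i then r1 else r2) j)) := by
        funext j; congr 1; funext i
        by_cases hh1 : s1 i
        · simp [hh1]
        · by_cases hh2 : s2 i <;> simp [hh1, hh2]
      rw [he]; exact h
    cases he1 : c s1 <;> cases he2 : c s2 <;> cases he3 : c s3
    -- (f,f,f) : majority-like, impossible
    · exfalso
      set W : Fin n → (Fin 2 → Bool) → Bool :=
        fun j v => F j (fun i => if s1 i then v 0 else if s2 i then v 1 else x0 j) with hW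
      have hWagg : isAggregator D W := by
        constructor
        · intro j bb
          have e : W j (fun _ => bb) =
              c (fun i => if s1 i then bb else if s2 i then bb else x0 j) := Fc j _
          rw [e]
          cases bb <;> cases hb : x0 j
          · rw [show (fun i : Fin k => if s1 i then false else if s2 i then false else false)
                = (fun _ => false) from funext fun i => by simp, cconstF]
          · rw [bl001, he3]
          · rw [bl110, ccompl, he3]; rfl
          · rw [show (fun i : Fin k => if s1 i then true else if s2 i then true else true)
                = (fun _ => true) from funext fun i => by simp, cconstT]
        · intro xs hxs
          exact memBlend (xs 0) (xs 1) x0 (hxs 0) (hxs 1) hx0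
      refine wcontra W hWagg ?_
      have e1 : W j0 (two true false) =
          c (fun i => if s1 i then true else if s2 i then false else x0 j0) := Fc j0 _
      have e2 : W j0 (two false true) =
          c (fun i => if s1 i then false else if s2 i then true else x0 j0) := Fc j0 _
      rw [e1, e2]
      cases hb : x0 j0
      · rw [bl100, bl010, he1, he2]
      · rw [bl101, bl011, ccompl, ccompl, he1, he2]
    -- (f,f,t) : third block wins
    · exact Or.inr (Or.inr ⟨rfl, rfl, rfl⟩)
    -- (f,t,f) : second block wins
    · exact Or.inr (Or.inl ⟨rfl, rfl, rfl⟩)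
    -- (f,t,t) : impossible, b0 into slot 1
    · exfalso
      set W : Fin n → (Fin 2 → Bool) → Bool :=
        fun j v => F j (fun i => if s1 i then x0 j else if s2 i then v 0 else v 1) with hW
      have hWagg : isAggregator D W := by
        constructor
        · intro j bb
          have e : W j (fun _ => bb) =
              c (fun i => if s1 i then x0 j else if s2 i then bb else bb) := Fc j _
          rw [e]
          cases bb <;> cases hb : x0 j
          · rw [show (fun i : Fin k => if s1 i then false else if s2 i then false else false)
                = (fun _ => false) from funext fun i => by simp, cconstF]
          · rw [bl100, he1]
          · rw [bl011, ccompl, he1]; rfl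
          · rw [show (fun i : Fin k => if s1 i then true else if s2 i then true else true)
                = (fun _ => true) from funext fun i => by simp, cconstT]
        · intro xs hxs
          exact memBlend x0 (xs 0) (xs 1) hx0 (hxs 0) (hxs 1)
      refine wcontra W hWagg ?_
      have e1 : W j0 (two true false) =
          c (fun i => if s1 i then x0 j0 else if s2 i then true else false) := Fc j0 _
      have e2 : W j0 (two false true) =
          c (fun i => if s1 i then x0 j0 else if s2 i then false else true) := Fc j0 _
      rw [e1, e2]
      cases hb : x0 j0
      · rw [bl010, bl001, he2, he3]
      · rw [bl110, bl101, ccompl, ccompl, he2, he3]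
    -- (t,f,f) : first block wins
    · exact Or.inl ⟨rfl, rfl, rfl⟩
    -- (t,f,t) : impossible, b0 into slot 2
    · exfalso
      set W : Fin n → (Fin 2 → Bool) → Bool :=
        fun j v => F j (fun i => if s1 i then v 0 else if s2 i then x0 j else v 1) with hW
      have hWagg : isAggregator D W := by
        constructor
        · intro j bb
          have e : W j (fun _ => bb) =
              c (fun i => if s1 i then bb else if s2 i then x0 j else bb) := Fc j _
          rw [e]
          cases bb <;> cases hb : x0 j
          · rw [show (fun i : Fin k => if s1 i then false else if s2 i then false else false)
                = (fun _ => false) from funext fun i => by simp, cconstF]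
          · rw [bl010, he2]
          · rw [bl101, ccompl, he2]; rfl
          · rw [show (fun i : Fin k => if s1 i then true else if s2 i then true else true)
                = (fun _ => true) from funext fun i => by simp, cconstT]
        · intro xs hxs
          exact memBlend (xs 0) x0 (xs 1) (hxs 0) hx0 (hxs 1)
      refine wcontra W hWagg ?_
      have e1 : W j0 (two true false) =
          c (fun i => if s1 i then true else if s2 i then x0 j0 else false) := Fc j0 _
      have e2 : W j0 (two false true) =
          c (fun i => if s1 i then false else if s2 i then x0 j0 else true) := Fc j0 _
      rw [e1, e2]
      cases hb : x0 j0
      · rw [bl100, bl001, he1, he3]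
      · rw [bl110, bl011, ccompl, ccompl, he1, he3]
    -- (t,t,f) : impossible, same construction as (f,f,f)
    · exfalso
      set W : Fin n → (Fin 2 → Bool) → Bool :=
        fun j v => F j (fun i => if s1 i then v 0 else if s2 i then v 1 else x0 j) with hW
      have hWagg : isAggregator D W := by
        constructor
        · intro j bb
          have e : W j (fun _ => bb) =
              c (fun i => if s1 i then bb else if s2 i then bb else x0 j) := Fc j _
          rw [e]
          cases bb <;> cases hb : x0 j
          · rw [show (fun i : Fin k => if s1 i then false else if s2 i then false else false)
                = (fun _ => false) from funext fun i => by simp, cconstF]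
          · rw [bl001, he3]
          · rw [bl110, ccompl, he3]; rfl
          · rw [show (fun i : Fin k => if s1 i then true else if s2 i then true else true)
                = (fun _ => true) from funext fun i => by simp, cconstT]
        · intro xs hxs
          exact memBlend (xs 0) (xs 1) x0 (hxs 0) (hxs 1) hx0
      refine wcontra W hWagg ?_
      have e1 : W j0 (two true false) =
          c (fun i => if s1 i then true else if s2 i then false else x0 j0) := Fc j0 _
      have e2 : W j0 (two false true) =
          c (fun i => if s1 i then false else if s2 i then true else x0 j0) := Fc j0 _
      rw [e1, e2]
      cases hb : x0 j0
      · rw [bl100, bl010, he1, he2]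
      · rw [bl101, bl011, ccompl, ccompl, he1, he2]
    -- (t,t,t) : xor, impossible via three distinct elements
    · exfalso
      set T : Fin n → (Fin 3 → Bool) → Bool :=
        fun j v => F j (fun i => if s1 i then v 0 else if s2 i then v 1 else v 2) with hT
      have hTagg : isAggregator D T := by
        constructor
        · intro j bb
          show F j (fun i => if s1 i then bb else if s2 i then bb else bb) = bb
          rw [show (fun i : Fin k => if s1 i then bb else if s2 i then bb else bb)
              = (fun _ => bb) from funext fun i => by simp]
          exact hun j bb
        · intro xs hxs
          exact memBlend (xs 0) (xs 1) (xs 2) (hxs 0) (hxs 1) (hxs 2)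
      have hxor : ∀ j (v : Fin 3 → Bool),
          T j v = Bool.xor (v 0) (Bool.xor (v 1) (v 2)) := by
        intro j v
        have e : T j v =
            c (fun i => if s1 i then v 0 else if s2 i then v 1 else v 2) := Fc j _
        rw [e]
        cases h0 : v 0 <;> cases h1 : v 1 <;> cases h2 : v 2
        · rw [show (fun i : Fin k => if s1 i then false else if s2 i then false else false)
              = (fun _ => false) from funext fun i => by simp, cconstF]; decide
        · rw [bl001, he3]; decide
        · rw [bl010, he2]; decide
        · rw [bl011, ccompl, he1]; decide
        · rw [bl100, he1]; decide
        · rw [bl101, ccompl, he2]; decide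
        · rw [bl110, ccompl, he3]; decide
        · rw [show (fun i : Fin k => if s1 i then true else if s2 i then true else true)
              = (fun _ => true) from funext fun i => by simp, cconstT]; decide
      have xorlem1 : ∀ a b c : Bool, Bool.xor a (Bool.xor b c) = a → b = c := by decide
      have xorlem2 : ∀ a b c : Bool, Bool.xor a (Bool.xor b c) = b → a = c := by decide
      have xorlem3 : ∀ a b c : Bool, Bool.xor a (Bool.xor b c) = c → a = b := by decide
      set xs3 : Fin 3 → (Fin n → Bool) :=
        fun i => if (i : ℕ) = 0 then x0 else if (i : ℕ) = 1 then y0 else z0 with hxs3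
      have hmem3 : ∀ i, xs3 i ∈ D := by
        intro i
        by_cases h0 : (i : ℕ) = 0
        · simp [hxs3, h0, hx0, show i = 0 from Fin.ext h0]
        · by_cases h1 : (i : ℕ) = 1 <;> simp [hxs3, h0, h1, hy0, hz0, show i ≠ 0 from fun h => h0 (by subst h; rfl)]
      obtain ⟨i3, hi⟩ := HG 3 (by norm_num) T hTagg xs3 hmem3
      have hvec : (fun j => T j (fun i => xs3 i j)) =
          fun j => Bool.xor (x0 j) (Bool.xor (y0 j) (z0 j)) := by
        funext j
        exact hxor j (fun i => xs3 i j)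
      rw [hvec] at hi
      fin_cases i3
      · exact hyz0 (funext fun j => xorlem1 _ _ _ (congrFun hi j))
      · exact hxz0 (funext fun j => xorlem2 _ _ _ (congrFun hi j))
      · exact hxy0 (funext fun j => xorlem3 _ _ _ (congrFun hi j))
  -- Finset reformulation
  set cS : Finset (Fin k) → Bool := fun S => c (fun i => decide (i ∈ S)) with hcS
  have cS_empty : cS ∅ = false := by
    show c (fun i => decide (i ∈ (∅ : Finset (Fin k)))) = false
    rw [show (fun i => decide (i ∈ (∅ : Finset (Fin k)))) = (fun _ => false)
        from funext fun i => by simp]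
    exact cconstF
  have cS_compl : ∀ S : Finset (Fin k), cS Sᶜ = !(cS S) := by
    intro S
    show c (fun i => decide (i ∈ Sᶜ)) = !(c (fun i => decide (i ∈ S)))
    rw [show (fun i => decide (i ∈ Sᶜ)) = (fun i => !(decide (i ∈ S)))
        from funext fun i => by simp]
    exact ccompl _
  have exactOneS : ∀ S T : Finset (Fin k), Disjoint S T →
      (cS S = true ∧ cS T = false ∧ cS ((S ∪ T)ᶜ) = false) ∨
      (cS S = false ∧ cS T = true ∧ cS ((S ∪ T)ᶜ) = false) ∨
      (cS S = false ∧ cS T = false ∧ cS ((S ∪ T)ᶜ) = true) := by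
    intro S T hST
    have h := exactOne (fun i => decide (i ∈ S)) (fun i => decide (i ∈ T)) (fun i hi => by
      have hiS : i ∈ S := of_decide_eq_true hi
      have hiT : i ∉ T := Finset.disjoint_left.mp hST hiS
      simp [hiT])
    have he : (fun i => !(decide (i ∈ S)) && !(decide (i ∈ T)))
        = fun i => decide (i ∈ (S ∪ T)ᶜ) := by
      funext i
      by_cases hS : i ∈ S <;> by_cases hT : i ∈ T <;> simp [hS, hT]
    rw [he] at h
    exact h
  have hsing : ∃ p : Fin k, cS {p} = true := by
    by_contra hns
    push_neg at hns
    have hns' : ∀ p, cS {p} = false := by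
      intro p
      cases h : cS {p}
      · rfl
      · exact absurd h (hns p)
    have claim : ∀ m : ℕ, ∀ S : Finset (Fin k), S.card ≤ m → S.Nonempty →
        S.card + 2 ≤ k → cS S = false := by
      intro m
      induction m with
      | zero =>
        intro S hle hne _
        obtain ⟨x, hx⟩ := hne
        have := Finset.card_pos.mpr ⟨x, hx⟩
        omega
      | succ m IH =>
        intro S hle hne hkk
        obtain ⟨x, hx⟩ := hne
        by_cases h1 : S.card = 1
        · obtain ⟨p, rfl⟩ := Finset.card_eq_one.mp h1
          exact hns' p
        · have h2 : 2 ≤ S.card := by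
            have := Finset.card_pos.mpr ⟨x, hx⟩
            omega
          have hce : (S.erase x).card = S.card - 1 := Finset.card_erase_of_mem hx
          have hne' : (S.erase x).Nonempty := by
            rw [← Finset.card_pos, hce]; omega
          have hdis : Disjoint ({x} : Finset (Fin k)) (S.erase x) := by
            simp [Finset.disjoint_left]
          have hu : ({x} : Finset (Fin k)) ∪ S.erase x = S := by
            rw [← Finset.insert_eq, Finset.insert_erase hx]
          rcases exactOneS {x} (S.erase x) hdis with ⟨h, _, _⟩ | ⟨_, h, _⟩ | ⟨_, _, h⟩
          · rw [hns' x] at h; exact absurd h (by decide)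
          · rw [IH (S.erase x) (by omega) hne' (by omega)] at h
            exact absurd h (by decide)
          · rw [hu] at h
            have h2 := (cS_compl S).symm.trans h
            cases hcsS : cS S
            · rfl
            · rw [hcsS] at h2; exact absurd h2 (by decide)
    have hk0 : (0 : ℕ) < k := by omega
    have hk1 : (1 : ℕ) < k := by omega
    set i0 : Fin k := ⟨0, hk0⟩ with hi0
    set i1 : Fin k := ⟨1, hk1⟩ with hi1
    have hne01 : i0 ≠ i1 := by
      simp [hi0, hi1, Fin.ext_iff]
    have hd01 : Disjoint ({i0} : Finset (Fin k)) {i1} := by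
      simp [Finset.disjoint_left, hne01]
    rcases exactOneS {i0} {i1} hd01 with ⟨h, _, _⟩ | ⟨_, h, _⟩ | ⟨_, _, h⟩
    · rw [hns' i0] at h; exact absurd h (by decide)
    · rw [hns' i1] at h; exact absurd h (by decide)
    · rcases Finset.eq_empty_or_nonempty (({i0} ∪ {i1} : Finset (Fin k))ᶜ) with hU | hU
      · rw [hU, cS_empty] at h; exact absurd h (by decide)
      · have hcard2 : ({i0} ∪ {i1} : Finset (Fin k)).card = 2 := by
          rw [← Finset.insert_eq]
          rw [Finset.card_insert_of_notMem (by simp [hne01])]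
          simp
        have hcardc : (({i0} ∪ {i1} : Finset (Fin k))ᶜ).card = k - 2 := by
          rw [Finset.card_compl, hcard2]
          simp
        rw [claim (k - 2) _ (by omega) hU (by omega)] at h
        exact absurd h (by decide)
  obtain ⟨p, hp⟩ := hsing
  refine ⟨p, fun j => funext fun v => ?_⟩
  rw [Fc j v]
  show c v = v p
  set S : Finset (Fin k) := Finset.univ.filter (fun i => v i = true) with hS
  have hSv : (fun i => decide (i ∈ S)) = v := by
    funext i
    by_cases hvi : v i = true <;> simp [hS, hvi]
  have hcv : cS S = c v := by
    show c (fun i => decide (i ∈ S)) = c v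
    rw [hSv]
  rw [← hcv]
  cases hvp : v p
  · have hpS : p ∉ S := by simp [hS, hvp]
    have hpSc : p ∈ Sᶜ := Finset.mem_compl.mpr hpS
    have hdis : Disjoint ({p} : Finset (Fin k)) (Sᶜ.erase p) := by
      simp [Finset.disjoint_left]
    have hu : ({p} : Finset (Fin k)) ∪ Sᶜ.erase p = Sᶜ := by
      rw [← Finset.insert_eq, Finset.insert_erase hpSc]
    rcases exactOneS {p} (Sᶜ.erase p) hdis with ⟨_, _, h⟩ | ⟨h, _, _⟩ | ⟨h, _, _⟩
    · rw [hu, compl_compl] at h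
      exact h
    · rw [hp] at h; exact absurd h (by decide)
    · rw [hp] at h; exact absurd h (by decide)
  · have hpS : p ∈ S := by simp [hS, hvp]
    have hdis : Disjoint ({p} : Finset (Fin k)) (S.erase p) := by
      simp [Finset.disjoint_left]
    have hu : ({p} : Finset (Fin k)) ∪ S.erase p = S := by
      rw [← Finset.insert_eq, Finset.insert_erase hpS]
    rcases exactOneS {p} (S.erase p) hdis with ⟨_, _, h⟩ | ⟨h, _, _⟩ | ⟨h, _, _⟩
    · rw [hu] at h
      have h2 := (cS_compl S).symm.trans h
      cases hcsS : cS S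
      · rw [hcsS] at h2; exact absurd h2 (by decide)
      · rfl
    · rw [hp] at h; exact absurd h (by decide)
    · rw [hp] at h; exact absurd h (by decide)


end Main

lemma gen_of_dict {n k : ℕ} {D : Set (Fin n → Bool)}
    {F : Fin n → (Fin k → Bool) → Bool} (h : isDictatorial F) :
    isGenDictatorship D F := by
  obtain ⟨i, hi⟩ := h
  intro xs _
  exact ⟨i, funext fun j => by rw [hi j]⟩

end NGD

/-- A non-degenerate domain with at least three elements admits an
aggregator that is not a generalized dictatorship iff it is a possibility domain
(admits a non-dictatorial aggregator of some arity). -/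
theorem not_gendict_iff_possibility {n : ℕ} (D : Set (Fin n → Bool))
    (hnondeg : ∀ j : Fin n, ∀ b : Bool, ∃ x ∈ D, x j = b)
    (hcard : ∃ x ∈ D, ∃ y ∈ D, ∃ z ∈ D, x ≠ y ∧ x ≠ z ∧ y ≠ z) :
    (∃ k : ℕ, 0 < k ∧ ∃ F : Fin n → (Fin k → Bool) → Bool,
        isAggregator D F ∧ ¬ isGenDictatorship D F) ↔
    (∃ k : ℕ, 0 < k ∧ ∃ F : Fin n → (Fin k → Bool) → Bool,
        isAggregator D F ∧ ¬ isDictatorial F) := by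
  constructor
  · rintro ⟨k, hk, F, hagg, hngd⟩
    exact ⟨k, hk, F, hagg, fun hdict => hngd (NGD.gen_of_dict hdict)⟩
  · rintro ⟨k, hk, F, hagg, hndict⟩
    by_contra hL
    push_neg at hL
    have HG : ∀ k : ℕ, 0 < k → ∀ F : Fin n → (Fin k → Bool) → Bool,
        isAggregator D F → isGenDictatorship D F := by
      intro k hk F hF
      by_contra hng
      exact hng (hL k hk F hF)
    apply hndict
    rcases Nat.lt_or_ge k 2 with h2 | h2
    · -- k = 1
      interval_cases k
      refine ⟨0, fun j => funext fun v => ?_⟩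
      have hv : v = fun _ => v 0 := funext fun i => by
        have : i = 0 := Subsingleton.elim _ _
        rw [this]
      rw [hv]
      exact hagg.1 j (v 0)
    · exact NGD.all_dict hnondeg hcard HG k h2 F hagg
end

section
/- If F = (f₁,…,f_n) and G = (g₁,…,g_n) are ternary aggregators for D ⊆ {0,1}^n and E = F ◇ G is defined by e_j(x,y,z) = f_j(g_j(x,y,z), g_j(y,z,x), g_j(z,x,y)), then E is a ternary aggregator for D, each e_j is commutative whenever g_j is commutative, and if g_j is commutative then e_j = g_j. -/
/-- A ternary Boolean function is commutative if
`g(x,x,y) = g(x,y,x) = g(y,x,x)`. -/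
def comm3 (g : Bool → Bool → Bool → Bool) : Prop :=
  ∀ x y : Bool, g x x y = g x y x ∧ g x y x = g y x x

/-- If `F`, `G` are ternary aggregators for `D` and
`e_j(x,y,z) = f_j(g_j(x,y,z), g_j(y,z,x), g_j(z,x,y))` (the diamond operator),
then `E = F ◇ G` is a ternary aggregator for `D`, `e_j` is commutative whenever
`g_j` is, and if `g_j` is commutative then `e_j = g_j`. -/
theorem diamond_operator_aggregator {n : ℕ} (D : Set (Fin n → Bool))
    (f g : Fin n → Bool → Bool → Bool → Bool)
    (hfu : ∀ j b, f j b b b = b) (hgu : ∀ j b, g j b b b = b)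
    (hf : ∀ x ∈ D, ∀ y ∈ D, ∀ z ∈ D, (fun j => f j (x j) (y j) (z j)) ∈ D)
    (hg : ∀ x ∈ D, ∀ y ∈ D, ∀ z ∈ D, (fun j => g j (x j) (y j) (z j)) ∈ D)
    (e : Fin n → Bool → Bool → Bool → Bool)
    (he : ∀ j x y z, e j x y z = f j (g j x y z) (g j y z x) (g j z x y)) :
    (∀ j b, e j b b b = b) ∧
    (∀ x ∈ D, ∀ y ∈ D, ∀ z ∈ D, (fun j => e j (x j) (y j) (z j)) ∈ D) ∧
    (∀ j, comm3 (g j) → comm3 (e j)) ∧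
    (∀ j, comm3 (g j) → e j = g j) := by
  have key : ∀ j, comm3 (g j) → e j = g j := by
    intro j hc
    have hcyc : ∀ a b c : Bool, g j a b c = g j b c a := by
      intro a b c
      cases a <;> cases b <;> cases c
      · rfl
      · exact (hc false true).1
      · exact (hc false true).2
      · exact ((hc true false).1.trans (hc true false).2).symm
      · exact ((hc false true).1.trans (hc false true).2).symm
      · exact (hc true false).2
      · exact (hc true false).1
      · rfl
    funext x y z
    rw [he, ← hcyc x y z, ← hcyc y z x, ← hcyc x y z, hfu]
  refine ⟨fun j b => by rw [he, hgu, hfu], ?_, fun j hc => ?_, key⟩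
  · intro x hx y hy z hz
    have : (fun j => e j (x j) (y j) (z j)) =
        (fun j => f j (g j (x j) (y j) (z j)) (g j (y j) (z j) (x j))
          (g j (z j) (x j) (y j))) := by
      funext j; rw [he]
    rw [this]
    exact hf _ (hg x hx y hy z hz) _ (hg y hy z hz x hx) _ (hg z hz x hx y hy)
  · rw [key j hc]; exact hc
end
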